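/- Let u : 𝒮(ℝ×ℝ², ℂ) → ℂ be a continuous linear functional such that: (i) u(χ) = 0 for every Schwartz function χ with χ(t,ξ) = 0 whenever t > 0; and (ii) u(χ) = 0 for every Schwartz function χ such that 𝓕χ(ω,σ) = 0 whenever |ω| > ‖σ‖. Let φ, ψ ∈ 𝒮(ℝ×ℝ², ℂ) satisfy φ(t,ξ) = 0 for all t < 0, and 𝓕ψ(ω,σ) = 𝓕φ(ω,σ) − 𝓕φ(−ω,σ) for all (ω,σ) with |ω| > ‖σ‖. Then u(ψ) = u(φ). -/

import Mathlib

/-! Write `φ̌(t, ξ) = φ(-t, ξ)`. Since `φ` vanishes for `t < 0`, `φ̌` vanishes for `t > 0`, so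
`u φ̌ = 0`; and `𝓕φ̌(ω, σ) = 𝓕φ(-ω, σ)`. Hence `𝓕(ψ - (φ - φ̌))` vanishes on the open cone
`|ω| > ‖σ‖`, so `u` kills `ψ - (φ - φ̌)` as well, and `u ψ = u φ - u φ̌ = u φ`. -/

open MeasureTheory Real Complex
open scoped RealInnerProductSpace

/-- Fourier transform on `ℝ × ℝ²`:
`𝓕f(ω,σ) = (2π)^{−3/2} ∫ f(t,ξ) e^{i(ωt + σ·ξ)} dt dξ`. -/
noncomputable def FT (f : ℝ × EuclideanSpace ℝ (Fin 2) → ℂ)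
    (ω : ℝ) (σ : EuclideanSpace ℝ (Fin 2)) : ℂ :=
  (((2 * π : ℝ) ^ (-(3 : ℝ) / 2) : ℝ) : ℂ) *
    ∫ p : ℝ × EuclideanSpace ℝ (Fin 2),
      f p * Complex.exp (Complex.I * ((ω * p.1 + ⟪σ, p.2⟫ : ℝ) : ℂ))

open scoped SchwartzMap

local notation "ℝ²" => EuclideanSpace ℝ (Fin 2)

instance : (volume : Measure (ℝ × ℝ²)).IsAddHaarMeasure :=
  Measure.prod.instIsAddHaarMeasure volume volume

lemma MeasureTheory.Integrable.mul_cexp_I_mul_ofReal {α : Type*} [MeasurableSpace α]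
    {μ : Measure α} {f : α → ℂ} {c : α → ℝ} (hf : Integrable f μ) (hc : Measurable c) :
    Integrable (fun x => f x * Complex.exp (Complex.I * (c x : ℂ))) μ :=
  hf.mul_bdd (c := 1) (by fun_prop : Measurable _).aestronglyMeasurable <| .of_forall fun x => by
    rw [mul_comm, Complex.norm_exp_ofReal_mul_I]

lemma FT_sub {f g : ℝ × ℝ² → ℂ} (hf : Integrable f) (hg : Integrable g) (ω : ℝ) (σ : ℝ²) :
    FT (f - g) ω σ = FT f ω σ - FT g ω σ := by
  have hc : Measurable fun p : ℝ × ℝ² => ω * p.1 + ⟪σ, p.2⟫ := by fun_prop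
  simp only [FT, Pi.sub_apply, sub_mul, ← mul_sub]
  rw [integral_sub (hf.mul_cexp_I_mul_ofReal hc) (hg.mul_cexp_I_mul_ofReal hc)]

lemma FT_comp_neg_fst (f : ℝ × ℝ² → ℂ) (ω : ℝ) (σ : ℝ²) :
    FT (fun p => f (-p.1, p.2)) ω σ = FT f (-ω) σ := by
  have hm : MeasurePreserving (fun p : ℝ × ℝ² => (-p.1, p.2)) :=
    (Measure.measurePreserving_neg _).prod (MeasurePreserving.id _)
  have he : MeasurableEmbedding (fun p : ℝ × ℝ² => (-p.1, p.2)) :=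
    ((MeasurableEquiv.neg ℝ).prodCongr (MeasurableEquiv.refl ℝ²)).measurableEmbedding
  unfold FT
  rw [← hm.integral_comp he]
  simp

noncomputable def timeReflection : 𝓢(ℝ × ℝ², ℂ) →L[ℂ] 𝓢(ℝ × ℝ², ℂ) :=
  SchwartzMap.compCLMOfContinuousLinearEquiv ℂ
    ((ContinuousLinearEquiv.neg ℝ).prodCongr (ContinuousLinearEquiv.refl ℝ ℝ²))

lemma FT_timeReflection (f : 𝓢(ℝ × ℝ², ℂ)) (ω : ℝ) (σ : ℝ²) :
    FT (timeReflection f) ω σ = FT f (-ω) σ :=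
  FT_comp_neg_fst f ω σ

theorem stmt13
    (u : SchwartzMap (ℝ × EuclideanSpace ℝ (Fin 2)) ℂ →L[ℂ] ℂ)
    (hsupp : ∀ χ : SchwartzMap (ℝ × EuclideanSpace ℝ (Fin 2)) ℂ,
      (∀ (t : ℝ) (ξ : EuclideanSpace ℝ (Fin 2)), 0 < t → χ (t, ξ) = 0) → u χ = 0)
    (hcone : ∀ χ : SchwartzMap (ℝ × EuclideanSpace ℝ (Fin 2)) ℂ,
      (∀ (ω : ℝ) (σ : EuclideanSpace ℝ (Fin 2)), ‖σ‖ < |ω| → FT (⇑χ) ω σ = 0) → u χ = 0)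
    (φ ψ : SchwartzMap (ℝ × EuclideanSpace ℝ (Fin 2)) ℂ)
    (hφ : ∀ (t : ℝ) (ξ : EuclideanSpace ℝ (Fin 2)), t < 0 → φ (t, ξ) = 0)
    (hψ : ∀ (ω : ℝ) (σ : EuclideanSpace ℝ (Fin 2)), ‖σ‖ < |ω| →
      FT (⇑ψ) ω σ = FT (⇑φ) ω σ - FT (⇑φ) (-ω) σ) :
    u ψ = u φ := by
  have hreflect : u (timeReflection φ) = 0 :=
    hsupp _ fun t ξ ht => hφ (-t) ξ (neg_neg_of_pos ht)
  have hdiff : u (ψ - (φ - timeReflection φ)) = 0 := by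
    refine hcone _ fun ω σ hωσ => ?_
    simp only [FunLike.coe_sub]
    rw [FT_sub ψ.integrable (φ.integrable.sub (timeReflection φ).integrable),
      FT_sub φ.integrable (timeReflection φ).integrable, FT_timeReflection, hψ ω σ hωσ, sub_self]
  rwa [map_sub, map_sub, hreflect, sub_zero, sub_eq_zero] at hdiff
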